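/- arXiv:2003.04077 — 2 statements merged into one kernel-verified Lean document; each statement's English description precedes it below -/
import Mathlib

section
/- Let λ ≠ 0 be real, let a, b : ℤ → [0,∞) be finitely supported, and define f(x) := e^{λ{x}} a(⌊x⌋), g(y) := e^{λ{y}} b(⌊y⌋). Then ∫_ℝ (f ⊛ g) ≤ ((e^{λ} − 1)/λ) · ∑_{n ∈ ℤ} max((a ⊛ b)(n), e^{λ} · (a ⊛ b)(n−1)). -/
/-!
Write `x = (x - y) + y`. Then `⌊x⌋ = ⌊x - y⌋ + ⌊y⌋ + c` and `{x} = {x - y} + {y} - c` with a carry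
`c ∈ {0, 1}`, so `f (x - y) g y` is `e^{λ{x}} a(⌊x⌋ - ⌊y⌋) b(⌊y⌋)` or `e^{λ{x}} e^λ a(⌊x⌋ - 1 - ⌊y⌋) b(⌊y⌋)`.
Hence `f ⊛ g ≤ e^{λ{x}} M ⌊x⌋` with `M n = max ((a ⊛ b) n) (e^λ (a ⊛ b) (n - 1))`, and integrating
this step function over each cell `[n, n + 1)` contributes `M n ∫₀¹ e^{λt} dt = M n (e^λ - 1) / λ`.
-/

open MeasureTheory
open Function Set Real Int
open scoped Pointwise ENNReal

lemma Int.floor_add_eq_or {R : Type*} [CommRing R] [LinearOrder R] [IsStrictOrderedRing R]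
    [FloorRing R] (x y : R) :
    (⌊x + y⌋ = ⌊x⌋ + ⌊y⌋ ∧ fract (x + y) = fract x + fract y) ∨
      (⌊x + y⌋ = ⌊x⌋ + ⌊y⌋ + 1 ∧ fract (x + y) = fract x + fract y - 1) := by
  have := floor_add_fract x; have := floor_add_fract y
  have := fract_nonneg x; have := fract_nonneg y
  have := fract_lt_one x; have := fract_lt_one y
  rcases lt_or_ge (fract x + fract y) 1 with h | h
  · have hfl : ⌊x + y⌋ = ⌊x⌋ + ⌊y⌋ := by
      rw [floor_eq_iff]; push_cast; constructor <;> linarith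
    refine Or.inl ⟨hfl, ?_⟩
    rw [← self_sub_floor, hfl]; push_cast; linarith
  · have hfl : ⌊x + y⌋ = ⌊x⌋ + ⌊y⌋ + 1 := by
      rw [floor_eq_iff]; push_cast; constructor <;> linarith
    refine Or.inr ⟨hfl, ?_⟩
    rw [← self_sub_floor, hfl]; push_cast; linarith

lemma bddAbove_range_of_support_finite {ι : Type*} {u : ι → ℝ} (hu : (support u).Finite) :
    BddAbove (range u) :=
  ((hu.image u).insert 0).bddAbove.mono (range_subset_insert_image_support u)

lemma iSup_nonneg_of_support_finite {ι : Type*} [Infinite ι] {u : ι → ℝ}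
    (hu : (support u).Finite) : 0 ≤ ⨆ i, u i := by
  obtain ⟨i, hi⟩ := hu.exists_notMem
  exact Real.iSup_nonneg' ⟨i, (notMem_support.mp hi).ge⟩

-- `⨆` over an unbounded family of reals is junk (`0`); finite support of `b` rules that out.
noncomputable def maxConv (a b : ℤ → ℝ) (n : ℤ) : ℝ := ⨆ m : ℤ, a (n - m) * b m

section maxConv

variable {a b : ℤ → ℝ}

lemma support_maxConv_term_finite (hb : (support b).Finite) (n : ℤ) :
    (support fun m => a (n - m) * b m).Finite :=
  hb.subset (support_mul_subset_right _ _)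

lemma le_maxConv (hb : (support b).Finite) (n m : ℤ) : a (n - m) * b m ≤ maxConv a b n :=
  le_ciSup (bddAbove_range_of_support_finite (support_maxConv_term_finite hb n)) m

lemma maxConv_nonneg (hb : (support b).Finite) (n : ℤ) : 0 ≤ maxConv a b n :=
  iSup_nonneg_of_support_finite (support_maxConv_term_finite hb n)

lemma support_maxConv_subset : support (maxConv a b) ⊆ support a + support b := by
  intro n hn
  obtain ⟨m, hm⟩ : ∃ m, a (n - m) * b m ≠ 0 := by
    by_contra! h
    exact hn (by simp only [maxConv, h, ciSup_const])
  exact ⟨n - m, left_ne_zero_of_mul hm, m, right_ne_zero_of_mul hm, sub_add_cancel n m⟩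

lemma support_maxConv_finite (ha : (support a).Finite) (hb : (support b).Finite) :
    (support (maxConv a b)).Finite :=
  (ha.add hb).subset support_maxConv_subset

end maxConv

noncomputable def carryMax (c : ℝ) (u : ℤ → ℝ) (n : ℤ) : ℝ := max (u n) (c * u (n - 1))

lemma support_carryMax_finite {c : ℝ} {u : ℤ → ℝ} (hu : (support u).Finite) :
    (support (carryMax c u)).Finite :=
  HasFiniteSupport.max hu (HasFiniteSupport.mul_right (fun _ => c)
    (HasFiniteSupport.fun_comp_of_injective (sub_left_injective (b := 1)) hu))

noncomputable def expStep (lam : ℝ) (u : ℤ → ℝ) (x : ℝ) : ℝ := exp (lam * fract x) * u ⌊x⌋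

lemma expStep_mul_expStep_le {lam : ℝ} {a b : ℤ → ℝ} (hb : (support b).Finite) (x y : ℝ) :
    expStep lam a x * expStep lam b y ≤ expStep lam (carryMax (exp lam) (maxConv a b)) (x + y) := by
  have hexp : 0 ≤ exp (lam * fract (x + y)) := (exp_pos _).le
  unfold expStep carryMax
  rcases Int.floor_add_eq_or x y with ⟨hfl, hfr⟩ | ⟨hfl, hfr⟩
  · calc exp (lam * fract x) * a ⌊x⌋ * (exp (lam * fract y) * b ⌊y⌋)
        = exp (lam * fract (x + y)) * (a (⌊x + y⌋ - ⌊y⌋) * b ⌊y⌋) := by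
          rw [hfr, hfl, add_sub_cancel_right, mul_add, exp_add]; ring
      _ ≤ _ := mul_le_mul_of_nonneg_left ((le_maxConv hb _ _).trans (le_max_left _ _)) hexp
  · calc exp (lam * fract x) * a ⌊x⌋ * (exp (lam * fract y) * b ⌊y⌋)
        = exp (lam * fract (x + y)) * (exp lam * (a (⌊x + y⌋ - 1 - ⌊y⌋) * b ⌊y⌋)) := by
          rw [hfr, hfl, add_sub_cancel_right, add_sub_cancel_right, mul_sub, mul_add, mul_one,
            exp_sub, exp_add]
          field_simp
      _ ≤ _ := mul_le_mul_of_nonneg_left ((mul_le_mul_of_nonneg_left (le_maxConv hb _ _)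
          (exp_pos _).le).trans (le_max_right _ _)) hexp

lemma lintegral_eq_tsum_setLIntegral_Ico_intCast (F : ℝ → ℝ≥0∞) :
    ∫⁻ x, F x = ∑' n : ℤ, ∫⁻ x in Ico (n : ℝ) (n + 1), F x := by
  rw [← setLIntegral_univ, ← iUnion_Ico_intCast ℝ,
    lintegral_iUnion (fun _ => measurableSet_Ico) (pairwise_disjoint_Ico_intCast ℝ)]

lemma setLIntegral_Ico_exp_sub_intCast (lam : ℝ) (n : ℤ) :
    ∫⁻ x in Ico (n : ℝ) (n + 1), ENNReal.ofReal (exp (lam * (x - n))) =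
      ENNReal.ofReal (∫ t in (0 : ℝ)..1, exp (lam * t)) := by
  have hcont : Continuous fun x : ℝ => exp (lam * (x - n)) := by fun_prop
  rw [← ofReal_integral_eq_lintegral_ofReal
    (hcont.integrableOn_Icc.mono_set Ico_subset_Icc_self)
    (Filter.Eventually.of_forall fun _ => (exp_pos _).le),
    integral_Ico_eq_integral_Ioo, ← integral_Ioc_eq_integral_Ioo,
    ← intervalIntegral.integral_of_le (by linarith),
    intervalIntegral.integral_comp_sub_right (fun t => exp (lam * t))]
  simp

lemma setLIntegral_Ico_expStep (lam : ℝ) (u : ℤ → ℝ) (n : ℤ) :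
    ∫⁻ x in Ico (n : ℝ) (n + 1), ENNReal.ofReal (expStep lam u x) =
      ENNReal.ofReal (∫ t in (0 : ℝ)..1, exp (lam * t)) * ENNReal.ofReal (u n) := by
  have hcongr : EqOn (fun x => ENNReal.ofReal (expStep lam u x))
      (fun x => ENNReal.ofReal (exp (lam * (x - n))) * ENNReal.ofReal (u n)) (Ico n (n + 1)) := by
    intro x hx
    have hfl : ⌊x⌋ = n := floor_eq_iff.mpr ⟨hx.1, hx.2⟩
    simp only [expStep, ← self_sub_floor, hfl, ENNReal.ofReal_mul (exp_pos _).le]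
  rw [setLIntegral_congr_fun measurableSet_Ico hcongr,
    lintegral_mul_const' _ _ ENNReal.ofReal_ne_top, setLIntegral_Ico_exp_sub_intCast]

lemma lintegral_expStep (lam : ℝ) (u : ℤ → ℝ) :
    ∫⁻ x, ENNReal.ofReal (expStep lam u x) =
      ENNReal.ofReal (∫ t in (0 : ℝ)..1, exp (lam * t)) * ∑' n, ENNReal.ofReal (u n) := by
  rw [lintegral_eq_tsum_setLIntegral_Ico_intCast, ← ENNReal.tsum_mul_left]
  exact tsum_congr (setLIntegral_Ico_expStep lam u)

lemma integral_exp_mul_zero_one {lam : ℝ} (hlam : lam ≠ 0) :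
    ∫ t in (0 : ℝ)..1, exp (lam * t) = (exp lam - 1) / lam := by
  rw [eq_div_iff hlam, mul_comm, intervalIntegral.mul_integral_comp_mul_left, integral_exp]
  simp

theorem lintegral_maxconv_le_general
    (lam : ℝ) (hlam : lam ≠ 0)
    (a b : ℤ → ℝ)
    (hsa : (Function.support a).Finite) (hsb : (Function.support b).Finite)
    (f g : ℝ → ℝ)
    (hf : ∀ x, f x = Real.exp (lam * Int.fract x) * a ⌊x⌋)
    (hg : ∀ y, g y = Real.exp (lam * Int.fract y) * b ⌊y⌋) :
    (∫⁻ x : ℝ, ENNReal.ofReal (⨆ y : ℝ, f (x - y) * g y)) ≤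
      ENNReal.ofReal (((Real.exp lam - 1) / lam) *
        ∑' n : ℤ, max (⨆ m : ℤ, a (n - m) * b m)
          (Real.exp lam * ⨆ m : ℤ, a (n - 1 - m) * b m)) := by
  set M := carryMax (exp lam) (maxConv a b)
  have hM_nonneg : ∀ n, 0 ≤ M n := fun n => (maxConv_nonneg hsb n).trans (le_max_left _ _)
  have hM_summable : Summable M :=
    summable_of_hasFiniteSupport (support_carryMax_finite (support_maxConv_finite hsa hsb))
  have hI_nonneg : 0 ≤ ∫ t in (0 : ℝ)..1, exp (lam * t) :=
    intervalIntegral.integral_nonneg zero_le_one fun _ _ => (exp_pos _).le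
  have hpointwise (x : ℝ) : ⨆ y, f (x - y) * g y ≤ expStep lam M x := ciSup_le fun y => by
    have h := expStep_mul_expStep_le (lam := lam) (a := a) hsb (x - y) y
    rw [sub_add_cancel] at h
    rwa [hf, hg]
  calc (∫⁻ x, ENNReal.ofReal (⨆ y, f (x - y) * g y))
      ≤ ∫⁻ x, ENNReal.ofReal (expStep lam M x) :=
        lintegral_mono fun x => ENNReal.ofReal_le_ofReal (hpointwise x)
    _ = ENNReal.ofReal ((∫ t in (0 : ℝ)..1, exp (lam * t)) * ∑' n, M n) := by
        rw [lintegral_expStep, ENNReal.ofReal_mul hI_nonneg,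
          ENNReal.ofReal_tsum_of_nonneg hM_nonneg hM_summable]
    _ = _ := by rw [integral_exp_mul_zero_one hlam]; rfl

theorem lintegral_maxconv_le
    (lam : ℝ) (hlam : lam ≠ 0)
    (a b : ℤ → ℝ) (ha : ∀ n, 0 ≤ a n) (hb : ∀ n, 0 ≤ b n)
    (hsa : (Function.support a).Finite) (hsb : (Function.support b).Finite)
    (f g : ℝ → ℝ)
    (hf : ∀ x, f x = Real.exp (lam * Int.fract x) * a ⌊x⌋)
    (hg : ∀ y, g y = Real.exp (lam * Int.fract y) * b ⌊y⌋) :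
    (∫⁻ x : ℝ, ENNReal.ofReal (⨆ y : ℝ, f (x - y) * g y)) ≤
      ENNReal.ofReal (((Real.exp lam - 1) / lam) *
        ∑' n : ℤ, max (⨆ m : ℤ, a (n - m) * b m)
          (Real.exp lam * ⨆ m : ℤ, a (n - 1 - m) * b m)) :=
  lintegral_maxconv_le_general lam hlam a b hsa hsb f g hf hg
end

section
/- Let A, B ⊆ ℤ be finite nonempty sets and let U = {0, 1}. Then |A + B + U| ≥ 2 · |A|^{1/2} · |B|^{1/2}. -/
/-! Two applications of Cauchy–Davenport give `|A| + |B| ≤ |A + B + {0, 1}|`, and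
`2 √|A| √|B| ≤ |A| + |B|` is AM–GM. -/

open scoped Pointwise

open Finset

lemma card_add_card_add_card_le_card_add_add {α : Type*} [LinearOrder α]
    [Add α] [IsCancelAdd α] [AddLeftMono α] [AddRightMono α]
    {s t u : Finset α} (hs : s.Nonempty) (ht : t.Nonempty) (hu : u.Nonempty) :
    #s + #t + #u ≤ #(s + t + u) + 2 := by
  have hst := cauchy_davenport_add_of_linearOrder_isCancelAdd hs ht
  have hstu := cauchy_davenport_add_of_linearOrder_isCancelAdd (hs.add ht) hu
  omega

lemma two_mul_sqrt_mul_sqrt_le_add {x y : ℝ} (hx : 0 ≤ x) (hy : 0 ≤ y) :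
    2 * √x * √y ≤ x + y := by
  simpa only [Real.sq_sqrt hx, Real.sq_sqrt hy] using two_mul_le_add_sq √x √y

theorem sumset_with_zero_one
    (A B : Finset ℤ) (hA : A.Nonempty) (hB : B.Nonempty) :
    ((A + B + ({0, 1} : Finset ℤ)).card : ℝ) ≥
      2 * Real.sqrt A.card * Real.sqrt B.card := by
  have hcard : #A + #B ≤ #(A + B + {0, 1}) := by
    simpa using card_add_card_add_card_le_card_add_add hA hB (insert_nonempty 0 {1})
  calc 2 * √(#A : ℝ) * √(#B : ℝ)
      ≤ #A + #B := two_mul_sqrt_mul_sqrt_le_add (by positivity) (by positivity)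
    _ ≤ #(A + B + {0, 1}) := by exact_mod_cast hcard
end
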